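/- Let K be a triangulated category and J ⊆ K a full triangulated subcategory. A morphism f : a → b in K is an isomorphism in the Verdier quotient K/J if and only if cone(f) lies in the thick closure of J. In particular, if J is thick, f is an isomorphism in K/J if and only if cone(f) ∈ J. -/

import Mathlib

open CategoryTheory Limits Pretriangulated ZeroObject

namespace Stmt3

/-- Port shim: `Triangulated.Subcategory` (Mathlib, Dec 2024), removed since; restated with
its old fields. -/
structure Triangulated.Subcategory (C : Type*) [Category C] [HasZeroObject C] [HasShift C ℤ]
    [Preadditive C] [∀ n : ℤ, (shiftFunctor C n).Additive] [Pretriangulated C] where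
  P : C → Prop
  zero' : ∃ (Z : C) (_ : IsZero Z), P Z
  shift (X : C) (n : ℤ) : P X → P (X⟦n⟧)
  ext₂' (T : Triangle C) (_ : T ∈ distTriang C) : P T.obj₁ → P T.obj₃ →
    ObjectProperty.isoClosure P T.obj₂

/-- Port shim: the old `Triangulated.Subcategory.W`. -/
def Triangulated.Subcategory.W {C : Type*} [Category C] [HasZeroObject C] [HasShift C ℤ]
    [Preadditive C] [∀ n : ℤ, (shiftFunctor C n).Additive] [Pretriangulated C]
    (S : Triangulated.Subcategory C) : MorphismProperty C :=
  fun X Y f => ∃ (Z : C) (g : Y ⟶ Z) (h : Z ⟶ X⟦(1 : ℤ)⟧)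
    (_ : Triangle.mk f g h ∈ distTriang C), S.P Z

variable {K : Type*} [Category K] [HasZeroObject K] [Preadditive K]
  [HasShift K ℤ] [∀ n : ℤ, (shiftFunctor K n).Additive] [Pretriangulated K]
  [IsTriangulated K]

/-- A class of objects is a thick triangulated subcategory: it contains the zero
objects, is stable under shifts, extensions (cones) and direct summands (retracts). -/
def IsThickTriangulated (T : Set K) : Prop :=
  (∀ Z : K, IsZero Z → Z ∈ T) ∧
  (∀ (a : K) (n : ℤ), a ∈ T → a⟦n⟧ ∈ T) ∧
  (∀ Tr : Triangle K, Tr ∈ (distTriang K) → Tr.obj₁ ∈ T → Tr.obj₂ ∈ T → Tr.obj₃ ∈ T) ∧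
  (∀ a b : K, a ∈ T → ∀ (i : b ⟶ a) (r : a ⟶ b), i ≫ r = 𝟙 b → b ∈ T)

/-- The thick closure of a class of objects : the smallest thick triangulated
subcategory containing it. -/
def thickClosure (S : Set K) : Set K :=
  ⋂₀ {T : Set K | S ⊆ T ∧ IsThickTriangulated T}

instance instIsTriangulatedP (J : Triangulated.Subcategory K) :
    ObjectProperty.IsTriangulated (J.P : ObjectProperty K) where
  exists_zero := by
    obtain ⟨Z, hZ, hP⟩ := J.zero'
    exact ⟨Z, hZ, hP⟩
  isStableUnderShiftBy n := ⟨fun X hX => J.shift X n hX⟩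
  ext₂' T hT h₁ h₃ := J.ext₂' T hT h₁ h₃

instance (J : Triangulated.Subcategory K) : J.W.IsCompatibleWithShift ℤ :=
  (inferInstance : (ObjectProperty.trW (J.P : ObjectProperty K)).IsCompatibleWithShift ℤ)

instance (J : Triangulated.Subcategory K) : J.W.IsMultiplicative :=
  (inferInstance : (ObjectProperty.trW (J.P : ObjectProperty K)).IsMultiplicative)

instance (J : Triangulated.Subcategory K) : J.W.HasLeftCalculusOfFractions :=
  (inferInstance : (ObjectProperty.trW (J.P : ObjectProperty K)).HasLeftCalculusOfFractions)

instance (J : Triangulated.Subcategory K) : J.W.HasRightCalculusOfFractions :=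
  (inferInstance : (ObjectProperty.trW (J.P : ObjectProperty K)).HasRightCalculusOfFractions)

instance (J : Triangulated.Subcategory K) : J.W.IsCompatibleWithTriangulation :=
  (inferInstance : (ObjectProperty.trW (J.P : ObjectProperty K)).IsCompatibleWithTriangulation)

/-- Objects of `J` become zero in the Verdier quotient. -/
lemma isZero_Q_obj (J : Triangulated.Subcategory K) {x : K} (hx : J.P x) :
    IsZero (J.W.Q.obj x) := by
  have hW : J.W ((Triangle.mk (𝟙 x) (0 : x ⟶ 0) 0).rotate.mor₁) :=
    ObjectProperty.trW.mk (J.P : ObjectProperty K) (rot_of_distTriang _ (contractible_distinguished x)) (J.shift x 1 hx)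
  have : IsIso (J.W.Q.map ((Triangle.mk (𝟙 x) (0 : x ⟶ 0) 0).rotate.mor₁)) :=
    Localization.inverts J.W.Q J.W _ hW
  have h0 : IsZero (J.W.Q.obj (0 : K)) := by
    rw [IsZero.iff_id_eq_zero, ← J.W.Q.map_id]
    rw [(isZero_zero K).eq_of_src (𝟙 (0 : K)) 0, J.W.Q.map_zero]
  exact h0.of_iso (@asIso _ _ _ _ _ this)

/-- The subcategory of objects that become zero in the quotient is thick. -/
lemma isThick_zeroSet (J : Triangulated.Subcategory K) :
    IsThickTriangulated {x : K | IsZero (J.W.Q.obj x)} := by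
  refine ⟨?_, ?_, ?_, ?_⟩
  · intro Z hZ
    simp only [Set.mem_setOf_eq, IsZero.iff_id_eq_zero] at hZ ⊢
    rw [← J.W.Q.map_id, hZ, J.W.Q.map_zero]
  · intro a n ha
    simp only [Set.mem_setOf_eq] at ha ⊢
    have : IsZero ((J.W.Q.obj a)⟦n⟧) := (shiftFunctor J.W.Localization n).map_isZero ha
    exact this.of_iso ((J.W.Q.commShiftIso n).app a)
  · intro Tr hTr h₁ h₂
    exact Triangle.isZero₃_of_isZero₁₂ _ (J.W.Q.map_distinguished _ hTr) h₁ h₂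
  · intro x y hx i r hir
    have hx' : IsZero (J.W.Q.obj x) := hx
    simp only [Set.mem_setOf_eq, IsZero.iff_id_eq_zero]
    rw [← J.W.Q.map_id, ← hir, J.W.Q.map_comp,
      hx'.eq_of_tgt (J.W.Q.map i) 0, zero_comp]

/-- For a full triangulated subcategory `J ⊆ K`, a morphism `f` becomes
an isomorphism in the Verdier quotient `K/J` iff its cone lies in the thick closure of
`J`; in particular if `J` is thick, iff its cone lies in `J`. -/
theorem stmt3 (J : Triangulated.Subcategory K)
    {a b : K} (f : a ⟶ b) (c : K) (g : b ⟶ c) (h : c ⟶ a⟦(1:ℤ)⟧)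
    (hT : Triangle.mk f g h ∈ (distTriang K)) :
    (IsIso (J.W.Q.map f) ↔ c ∈ thickClosure {x : K | J.P x}) ∧
    (IsThickTriangulated {x : K | J.P x} →
      (IsIso (J.W.Q.map f) ↔ J.P c)) := by
  have hQT : J.W.Q.mapTriangle.obj (Triangle.mk f g h) ∈
      distTriang J.W.Localization := J.W.Q.map_distinguished _ hT
  have main : IsIso (J.W.Q.map f) ↔ c ∈ thickClosure {x : K | J.P x} := by
    constructor
    · intro hiso
      -- the cone becomes zero in the quotient
      have hzero : IsZero (J.W.Q.obj c) :=
        Triangle.isZero₃_of_isIso₁ _ hQT hiso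
      -- hence `𝟙 c` and `0` agree in the quotient
      have heq : J.W.Q.map (𝟙 c) = J.W.Q.map (0 : c ⟶ c) := by
        rw [J.W.Q.map_id, J.W.Q.map_zero]
        exact hzero.eq_of_src _ _
      obtain ⟨d, s, hs, hfac⟩ :=
        (MorphismProperty.map_eq_iff_postcomp J.W.Q J.W (𝟙 c) 0).1 heq
      have hs0 : s = 0 := by simpa using hfac
      rw [hs0] at hs
      obtain ⟨Z, g', h', hdist, hZ⟩ := hs
      have hrot := rot_of_distTriang _ hdist
      obtain ⟨e, he₁, he₂⟩ := exists_iso_binaryBiproduct_of_distTriang _ hrot (by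
        show -((shiftFunctor K (1:ℤ)).map (0 : c ⟶ d)) = 0
        rw [Functor.map_zero, neg_zero])
      -- e : Z ≅ d ⊞ c⟦1⟧
      intro T hTmem
      obtain ⟨hsub, hthick⟩ := hTmem
      have hZT : Z ∈ T := hsub hZ
      have h1 : c⟦(1:ℤ)⟧ ∈ T :=
        hthick.2.2.2 Z _ hZT (biprod.inr ≫ e.inv) (e.hom ≫ biprod.snd) (by exact (Category.assoc _ _ _).trans ((congrArg (biprod.inr ≫ ·) (e.inv_hom_id_assoc biprod.snd)).trans biprod.inr_snd))
      have h2 : (c⟦(1:ℤ)⟧)⟦(-1:ℤ)⟧ ∈ T := hthick.2.1 _ (-1) h1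
      exact hthick.2.2.2 _ c h2 ((shiftEquiv K (1:ℤ)).unitIso.hom.app c)
        ((shiftEquiv K (1:ℤ)).unitIso.inv.app c) (by simp)
    · intro hc
      have hmem : c ∈ {x : K | IsZero (J.W.Q.obj x)} :=
        hc _ ⟨fun x hx => isZero_Q_obj J hx, isThick_zeroSet J⟩
      exact (Triangle.isZero₃_iff_isIso₁ _ hQT).1 hmem
  refine ⟨main, fun hthick => main.trans ?_⟩
  constructor
  · intro hc
    exact hc _ ⟨fun x hx => hx, hthick⟩
  · intro hc T hTmem
    exact hTmem.1 hc

end Stmt3
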